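/- Let U ∈ ℝ^{n×2} and Û ∈ ℝ^{n×2} each have orthonormal columns, and let δ = ‖(I − Û Ûᵀ) U‖₂. Then |det(Uᵀ Û)| ≥ 1 − δ². -/

import Mathlib

open Matrix MeasureTheory ProbabilityTheory Real

noncomputable section

/-- Euclidean (ℓ₂) norm of a vector in ℝ^n. -/
def norm2 {n : ℕ} (x : Fin n → ℝ) : ℝ := Real.sqrt (∑ i, x i ^ 2)

/-- Entrywise maximum absolute value (ℓ_∞ norm) of a vector in ℝ^n. -/
def normInf {n : ℕ} (x : Fin n → ℝ) : ℝ := ⨆ i, |x i|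

/-- Euclidean inner product on ℝ^n. -/
def inner2 {n : ℕ} (x y : Fin n → ℝ) : ℝ := ∑ i, x i * y i

/-- Spectral norm (ℓ₂ operator norm) of a real matrix. -/
def specNorm {m n : ℕ} (A : Matrix (Fin m) (Fin n) ℝ) : ℝ :=
  ⨆ x : {x : Fin n → ℝ // norm2 x ≤ 1}, norm2 (A.mulVec x.1)

/-- Max-norm: maximum absolute value of the entries of a matrix. -/
def maxNorm {m n : ℕ} (A : Matrix (Fin m) (Fin n) ℝ) : ℝ :=
  ⨆ q : Fin m × Fin n, |A q.1 q.2|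

/-- The n×2 matrix with columns u and v. -/
def twoCols {n : ℕ} (u v : Fin n → ℝ) : Matrix (Fin n) (Fin 2) ℝ :=
  Matrix.of fun i j => ![u i, v i] j

/-- The all-ones vector in ℝ^n. -/
def onesVec (n : ℕ) : Fin n → ℝ := fun _ => 1

/-- `σ1 ≥ σ2 ≥ 0` are the two largest singular values of `H`, with corresponding
orthonormal left singular vectors `u1, u2` (eigenvectors of `H Hᵀ`). -/
def IsTopTwoSingular {n : ℕ} (H : Matrix (Fin n) (Fin n) ℝ)
    (σ1 σ2 : ℝ) (u1 u2 : Fin n → ℝ) : Prop :=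
  0 ≤ σ2 ∧ σ2 ≤ σ1 ∧
  inner2 u1 u1 = 1 ∧ inner2 u2 u2 = 1 ∧ inner2 u1 u2 = 0 ∧
  (H * Hᵀ).mulVec u1 = σ1 ^ 2 • u1 ∧
  (H * Hᵀ).mulVec u2 = σ2 ^ 2 • u2 ∧
  ∀ v : Fin n → ℝ, inner2 v u1 = 0 → inner2 v u2 = 0 →
    inner2 ((H * Hᵀ).mulVec v) v ≤ σ2 ^ 2 * inner2 v v

/-- The uniform probability measure on the interval [−M, M]. -/
def unifIcc (M : ℝ) : Measure ℝ :=
  (ENNReal.ofReal (2 * M))⁻¹ • volume.restrict (Set.Icc (-M) M)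

/-- The ERO mixture law of a single pairwise measurement `R_{ij}` (with `a = r_i`, `b = r_j`):
`a − b` w.p. `ηp`, uniform on `[−M, M]` w.p. `(1−η)p`, and `0` w.p. `1−p`. -/
def EROmix (M p η a b : ℝ) : Measure ℝ :=
  ENNReal.ofReal (η * p) • Measure.dirac (a - b) +
    ENNReal.ofReal ((1 - η) * p) • unifIcc M +
    ENNReal.ofReal (1 - p) • Measure.dirac (0 : ℝ)

/-- The Erdős–Rényi Outliers (ERO) model: `H` is skew-symmetric with zero diagonal, the
above-diagonal entries are jointly independent, and each `H_{ij}` (i < j) has the ERO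
mixture law. -/
structure IsEROModel {Ω : Type} [MeasurableSpace Ω] (P : Measure Ω)
    {n : ℕ} (M p η : ℝ) (r : Fin n → ℝ)
    (H : Ω → Matrix (Fin n) (Fin n) ℝ) : Prop where
  diag : ∀ ω i, H ω i i = 0
  skew : ∀ ω i j, H ω j i = - H ω i j
  meas : ∀ i j, Measurable fun ω => H ω i j
  indep : iIndepFun (m := fun _ => Real.measurableSpace)
    (fun (q : {q : Fin n × Fin n // q.1 < q.2}) ω => H ω q.1.1 q.1.2) P
  law : ∀ i j : Fin n, i < j →
    Measure.map (fun ω => H ω i j) P = EROmix M p η (r i) (r j)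


/-! With `P = 1 - Û Ûᵀ` (the orthogonal projection onto the complement of the range of `Û`)
and `W = Uᵀ Û`, one has `(P U)ᵀ (P U) = 1 - W Wᵀ`, so the spectral-norm bound `‖P U x‖ ≤ δ ‖x‖`
says that the quadratic form of `W Wᵀ` dominates `(1 - δ²) ‖x‖²`. A symmetric `2 × 2` matrix
dominating `t • 1` with `t ≥ 0` has determinant at least `t²` (its off-diagonal entry is controlled
by the discriminant), and `det (W Wᵀ) = (det W)²`. -/

open scoped Matrix.Norms.L2Operator

lemma norm2_eq_norm {n : ℕ} (x : Fin n → ℝ) :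
    norm2 x = ‖(WithLp.toLp 2 x : EuclideanSpace ℝ (Fin n))‖ := by
  simp [norm2, EuclideanSpace.norm_eq]

lemma norm2_smul {n : ℕ} (c : ℝ) (x : Fin n → ℝ) : norm2 (c • x) = |c| * norm2 x := by
  simp only [norm2_eq_norm, WithLp.toLp_smul, norm_smul, Real.norm_eq_abs]

lemma norm2_nonneg {n : ℕ} (x : Fin n → ℝ) : 0 ≤ norm2 x := Real.sqrt_nonneg _

lemma sq_norm2 {n : ℕ} (x : Fin n → ℝ) : norm2 x ^ 2 = x ⬝ᵥ x := by
  rw [norm2, Real.sq_sqrt (Finset.sum_nonneg fun i _ => sq_nonneg (x i))]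
  simp only [dotProduct, sq]

lemma norm2_mulVec_le_l2_opNorm {m n : ℕ} (A : Matrix (Fin m) (Fin n) ℝ) (x : Fin n → ℝ) :
    norm2 (A *ᵥ x) ≤ ‖A‖ * norm2 x := by
  rw [norm2_eq_norm, norm2_eq_norm]
  exact A.l2_opNorm_mulVec (WithLp.toLp 2 x)

lemma bddAbove_norm2_mulVec {m n : ℕ} (A : Matrix (Fin m) (Fin n) ℝ) :
    BddAbove (Set.range fun x : {x : Fin n → ℝ // norm2 x ≤ 1} => norm2 (A *ᵥ x.1)) := by
  refine ⟨‖A‖, ?_⟩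
  rintro _ ⟨⟨x, hx⟩, rfl⟩
  exact (norm2_mulVec_le_l2_opNorm A x).trans (mul_le_of_le_one_right (norm_nonneg A) hx)

lemma norm2_mulVec_le_specNorm {m n : ℕ} (A : Matrix (Fin m) (Fin n) ℝ) {x : Fin n → ℝ}
    (hx : norm2 x ≤ 1) : norm2 (A *ᵥ x) ≤ specNorm A :=
  le_ciSup (bddAbove_norm2_mulVec A) (⟨x, hx⟩ : {x : Fin n → ℝ // norm2 x ≤ 1})

lemma norm2_mulVec_le {m n : ℕ} (A : Matrix (Fin m) (Fin n) ℝ) (x : Fin n → ℝ) :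
    norm2 (A *ᵥ x) ≤ specNorm A * norm2 x := by
  rcases (norm2_nonneg x).eq_or_lt with hx | hx
  · have := norm2_mulVec_le_l2_opNorm A x
    rwa [← hx, mul_zero] at this ⊢
  · have hunit : norm2 ((norm2 x)⁻¹ • x) ≤ 1 := by
      rw [norm2_smul, abs_inv, abs_of_pos hx, inv_mul_cancel₀ hx.ne']
    have := norm2_mulVec_le_specNorm A hunit
    rwa [mulVec_smul, norm2_smul, abs_inv, abs_of_pos hx, inv_mul_le_iff₀' hx] at this

lemma dotProduct_transpose_mul_self_mulVec_le {m n : ℕ} (A : Matrix (Fin m) (Fin n) ℝ)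
    (x : Fin n → ℝ) : x ⬝ᵥ (Aᵀ * A) *ᵥ x ≤ specNorm A ^ 2 * (x ⬝ᵥ x) := by
  rw [← mulVec_mulVec, dotProduct_transpose_mulVec, ← sq_norm2, ← sq_norm2, ← mul_pow]
  exact pow_le_pow_left₀ (norm2_nonneg _) (norm2_mulVec_le A x) 2

lemma gram_one_sub_mul_transpose_mul {R m k l : Type*} [CommRing R] [Fintype m] [Fintype l]
    [DecidableEq m] [DecidableEq l] (U : Matrix m k R) (V : Matrix m l R) (hV : Vᵀ * V = 1) :
    ((1 - V * Vᵀ) * U)ᵀ * ((1 - V * Vᵀ) * U) = Uᵀ * U - (Uᵀ * V) * (Uᵀ * V)ᵀ := by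
  have hsymm : (1 - V * Vᵀ)ᵀ = 1 - V * Vᵀ := by
    rw [transpose_sub, transpose_one, transpose_mul, transpose_transpose]
  have hidem : (1 - V * Vᵀ) * (1 - V * Vᵀ) = 1 - V * Vᵀ := by
    have hproj : V * Vᵀ * (V * Vᵀ) = V * Vᵀ := by
      rw [Matrix.mul_assoc, ← Matrix.mul_assoc Vᵀ, hV, Matrix.one_mul]
    rw [sub_mul, mul_sub, mul_sub, hproj]
    simp only [Matrix.one_mul, Matrix.mul_one]
    abel
  calc ((1 - V * Vᵀ) * U)ᵀ * ((1 - V * Vᵀ) * U)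
      = Uᵀ * ((1 - V * Vᵀ)ᵀ * (1 - V * Vᵀ)) * U := by
        simp only [transpose_mul, Matrix.mul_assoc]
    _ = Uᵀ * U - (Uᵀ * V) * (Uᵀ * V)ᵀ := by
        rw [hsymm, hidem, Matrix.mul_sub, Matrix.sub_mul, transpose_mul, transpose_transpose]
        simp only [Matrix.mul_one, Matrix.mul_assoc]

lemma sq_le_det_of_forall_smul_le {B : Matrix (Fin 2) (Fin 2) ℝ} (hB : Bᵀ = B) {t : ℝ}
    (ht : 0 ≤ t) (h : ∀ x, t * (x ⬝ᵥ x) ≤ x ⬝ᵥ B *ᵥ x) : t ^ 2 ≤ B.det := by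
  have hsymm : B 1 0 = B 0 1 := by simpa using congr_fun (congr_fun hB 0) 1
  have hq : ∀ s u, t * (s ^ 2 + u ^ 2) ≤ B 0 0 * s ^ 2 + 2 * B 0 1 * s * u + B 1 1 * u ^ 2 := by
    intro s u
    have := h ![s, u]
    simp only [dotProduct, mulVec, Fin.sum_univ_two, cons_val_zero, cons_val_one,
      cons_val_fin_one, hsymm] at this
    linarith
  have ha := hq 1 0
  have hc := hq 0 1
  have hdisc : discrim (B 0 0 - t) (2 * B 0 1) (B 1 1 - t) ≤ 0 :=
    discrim_le_zero fun s => by nlinarith [hq s 1]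
  rw [det_fin_two, hsymm]
  rw [discrim] at hdisc
  nlinarith

/-- Claim: determinant lower bound via the sin-Θ distance. -/
theorem stmt_19 {n : ℕ} (U Uh : Matrix (Fin n) (Fin 2) ℝ)
    (hU : Uᵀ * U = 1) (hUh : Uhᵀ * Uh = 1)
    (δ : ℝ) (hδ : δ = specNorm ((1 - Uh * Uhᵀ) * U)) :
    1 - δ ^ 2 ≤ |(Uᵀ * Uh).det| := by
  set W := Uᵀ * Uh
  rcases le_or_gt 1 (δ ^ 2) with hδ1 | hδ1
  · linarith [abs_nonneg W.det]
  have hform : ∀ x, (1 - δ ^ 2) * (x ⬝ᵥ x) ≤ x ⬝ᵥ (W * Wᵀ) *ᵥ x := by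
    intro x
    have := dotProduct_transpose_mul_self_mulVec_le ((1 - Uh * Uhᵀ) * U) x
    rw [gram_one_sub_mul_transpose_mul U Uh hUh, hU, ← hδ, sub_mulVec, one_mulVec,
      dotProduct_sub] at this
    linarith
  have hdet := sq_le_det_of_forall_smul_le (by rw [transpose_mul, transpose_transpose])
    (by linarith) hform
  rw [det_mul, det_transpose, ← sq] at hdet
  exact (le_abs_self _).trans (sq_le_sq.mp hdet)
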